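/- arXiv:2206.09400 — 3 statements merged into one kernel-verified Lean document; each statement's English description precedes it below -/
import Mathlib

section
/- Let T be a Hom-finite Krull-Schmidt triangulated K-category, I a functorially finite ideal of T, and X --f--> Y --g--> Z --h--> X[1] a distinguished triangle. Then g is a right I-approximation of Z if and only if h is a left Gh_I-approximation of Z; moreover g is an I-sink map if and only if h is a Gh_I-source map. -/
/-!
In a distinguished triangle `X ⟶ Y ⟶ Z ⟶ X⟦1⟧`, a map into `Z` factors through `g` iff it is
killed by `h`, and a map out of `Z` factors through `h` iff it is killed by `g`. Hence if `g`
is a right `I`-approximation, `h` kills `I` and is a weak cokernel of `g ∈ I`, i.e. a left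
`Gh_I`-approximation. Conversely, the cone map `h'` of a right `I`-approximation `i` of `Z` is an
`I`-ghost, so it factors through `h`; then `g ≫ h' = 0` makes `g` factor through `i`, so `g ∈ I`.
Minimality passes between `g` and `h` by completing `(u, 𝟙)`-type squares to morphisms of
triangles and applying the triangulated five lemma.
-/

open CategoryTheory CategoryTheory.Limits CategoryTheory.Pretriangulated

universe v u

variable {C : Type u} [Category.{v} C]

/-- An ideal of a preadditive category: an additive sub-bifunctor of `Hom(-,-)`. -/
structure CatIdeal (C : Type u) [Category.{v} C] [Preadditive C] where
  carrier : ∀ {X Y : C}, Set (X ⟶ Y)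
  add_mem : ∀ {X Y : C} {f g : X ⟶ Y}, f ∈ carrier → g ∈ carrier → f + g ∈ carrier
  zero_mem : ∀ {X Y : C}, (0 : X ⟶ Y) ∈ carrier
  neg_mem : ∀ {X Y : C} {f : X ⟶ Y}, f ∈ carrier → -f ∈ carrier
  comp_left : ∀ {X Y Z : C} (f : X ⟶ Y) {g : Y ⟶ Z}, g ∈ carrier → f ≫ g ∈ carrier
  comp_right : ∀ {X Y Z : C} {f : X ⟶ Y} (g : Y ⟶ Z), f ∈ carrier → f ≫ g ∈ carrier

variable [Preadditive C]

/-- `h` is an `I`-ghost: `i ≫ h = 0` for every composable `i ∈ I`. -/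
def IsGhost (I : CatIdeal C) {A B : C} (h : A ⟶ B) : Prop :=
  ∀ {W : C} (i : W ⟶ A), i ∈ I.carrier → i ≫ h = 0

/-- `g ∈ I` is a right `I`-approximation of its target. -/
def IsRightApprox (I : CatIdeal C) {A B : C} (g : A ⟶ B) : Prop :=
  g ∈ I.carrier ∧ ∀ {X : C} (i : X ⟶ B), i ∈ I.carrier → ∃ j : X ⟶ A, j ≫ g = i

/-- `g` is an `I`-sink map: a right minimal right `I`-approximation. -/
def IsISinkMap (I : CatIdeal C) {A B : C} (g : A ⟶ B) : Prop :=
  IsRightApprox I g ∧ ∀ u : A ⟶ A, u ≫ g = g → IsIso u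

/-- `h` is a left `Gh_I`-approximation of its source. -/
def IsLeftGhostApprox (I : CatIdeal C) {B W : C} (h : B ⟶ W) : Prop :=
  IsGhost I h ∧ ∀ {V : C} (j : B ⟶ V), IsGhost I j → ∃ t : W ⟶ V, h ≫ t = j

/-- `h` is a `Gh_I`-source map: a left minimal left `Gh_I`-approximation. -/
def IsGhostSourceMap (I : CatIdeal C) {B W : C} (h : B ⟶ W) : Prop :=
  IsLeftGhostApprox I h ∧ ∀ u : W ⟶ W, h ≫ u = h → IsIso u

/-- `I` is functorially finite. -/
def FunctoriallyFinite (I : CatIdeal C) : Prop :=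
  (∀ T₀ : C, ∃ (X : C) (i : X ⟶ T₀), i ∈ I.carrier ∧
      ∀ {X' : C} (j : X' ⟶ T₀), j ∈ I.carrier → ∃ t : X' ⟶ X, t ≫ i = j) ∧
  (∀ T₀ : C, ∃ (Y : C) (r : T₀ ⟶ Y), r ∈ I.carrier ∧
      ∀ {Y' : C} (s : T₀ ⟶ Y'), s ∈ I.carrier → ∃ t : Y ⟶ Y', r ≫ t = s)

def IsRightMinimal {A B : C} (g : A ⟶ B) : Prop :=
  ∀ u : A ⟶ A, u ≫ g = g → IsIso u

def IsLeftMinimal {A B : C} (h : A ⟶ B) : Prop :=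
  ∀ u : B ⟶ B, h ≫ u = h → IsIso u

lemma isGhost_of_isRightApprox_of_comp_eq_zero {I : CatIdeal C} {A B W : C} {g : A ⟶ B}
    {h : B ⟶ W} (hg : IsRightApprox I g) (hgh : g ≫ h = 0) : IsGhost I h := by
  intro V i hi
  obtain ⟨j, rfl⟩ := hg.2 i hi
  rw [Category.assoc, hgh, comp_zero]

section Pretriangulated

variable [HasZeroObject C] [HasShift C ℤ] [∀ n : ℤ, (shiftFunctor C n).Additive]
  [Pretriangulated C] {I : CatIdeal C} {X Y Z : C} {f : X ⟶ Y} {g : Y ⟶ Z}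
  {h : Z ⟶ X⟦(1 : ℤ)⟧}

lemma isLeftGhostApprox_of_isRightApprox (hT : Triangle.mk f g h ∈ distTriang C)
    (hg : IsRightApprox I g) : IsLeftGhostApprox I h := by
  refine ⟨isGhost_of_isRightApprox_of_comp_eq_zero hg (comp_distTriang_mor_zero₂₃ _ hT),
    fun j hj => ?_⟩
  obtain ⟨t, ht⟩ := Triangle.yoneda_exact₃ _ hT j (hj g hg.1)
  exact ⟨t, ht.symm⟩

lemma isRightApprox_of_isLeftGhostApprox (hT : Triangle.mk f g h ∈ distTriang C)
    {X₀ : C} {i : X₀ ⟶ Z} (hi : IsRightApprox I i) (hh : IsLeftGhostApprox I h) :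
    IsRightApprox I g := by
  obtain ⟨_, h', _, hT'⟩ := distinguished_cocone_triangle i
  have hh' : IsGhost I h' :=
    isGhost_of_isRightApprox_of_comp_eq_zero hi (comp_distTriang_mor_zero₁₂ _ hT')
  obtain ⟨b, hb⟩ := hh.2 h' hh'
  have hgh : g ≫ h = 0 := comp_distTriang_mor_zero₂₃ _ hT
  have hgh' : g ≫ h' = 0 := by rw [← hb, ← Category.assoc, hgh, zero_comp]
  obtain ⟨s, hs⟩ := Triangle.coyoneda_exact₂ _ hT' g hgh'
  refine ⟨hs ▸ I.comp_left s hi.1, fun j hj => ?_⟩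
  obtain ⟨k, hk⟩ := Triangle.coyoneda_exact₃ _ hT j (hh.1 j hj)
  exact ⟨k, hk.symm⟩

lemma isRightApprox_iff_isLeftGhostApprox (hT : Triangle.mk f g h ∈ distTriang C)
    (hZ : ∃ (X₀ : C) (i : X₀ ⟶ Z), IsRightApprox I i) :
    IsRightApprox I g ↔ IsLeftGhostApprox I h := by
  obtain ⟨_, _, hi⟩ := hZ
  exact ⟨isLeftGhostApprox_of_isRightApprox hT, isRightApprox_of_isLeftGhostApprox hT hi⟩

lemma isRightMinimal_of_isLeftMinimal (hT : Triangle.mk f g h ∈ distTriang C)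
    (hh : IsLeftMinimal h) : IsRightMinimal g := by
  intro u hu
  have hT' := rot_of_distTriang _ hT
  have comm : g ≫ 𝟙 Z = u ≫ g := by rw [Category.comp_id, hu]
  obtain ⟨c, hc₁, hc₂⟩ := complete_distinguished_triangle_morphism _ _ hT' hT' u (𝟙 Z) comm
  have hc : IsIso c := hh c (hc₁.trans (Category.id_comp h))
  let φ : (Triangle.mk f g h).rotate ⟶ (Triangle.mk f g h).rotate :=
    Triangle.homMk _ _ u (𝟙 Z) c comm hc₁ hc₂
  exact isIso₁_of_isIso₂₃ φ hT' hT' (IsIso.id Z) hc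

lemma isLeftMinimal_of_isRightMinimal (hT : Triangle.mk f g h ∈ distTriang C)
    (hg : IsRightMinimal g) : IsLeftMinimal h := by
  intro u hu
  obtain ⟨a, rfl⟩ := (shiftFunctor C (1 : ℤ)).map_surjective u
  have comm : h ≫ a⟦(1 : ℤ)⟧' = 𝟙 Z ≫ h := by rw [Category.id_comp, hu]
  obtain ⟨w, hw₁, hw₂⟩ := complete_distinguished_triangle_morphism₂ _ _ hT hT a (𝟙 Z) comm
  have hw : IsIso w := hg w (hw₂.symm.trans (Category.comp_id g))
  have : IsIso a := isIso₁_of_isIso₂₃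
    (Triangle.homMk (Triangle.mk f g h) (Triangle.mk f g h) a w (𝟙 Z) hw₁ hw₂ comm)
    hT hT hw (IsIso.id Z)
  infer_instance

lemma isRightMinimal_iff_isLeftMinimal (hT : Triangle.mk f g h ∈ distTriang C) :
    IsRightMinimal g ↔ IsLeftMinimal h :=
  ⟨isLeftMinimal_of_isRightMinimal hT, isRightMinimal_of_isLeftMinimal hT⟩

end Pretriangulated

/-- Let `X ⟶ Y ⟶ Z ⟶ X[1]` be a distinguished triangle in a Hom-finite Krull-Schmidt
triangulated `K`-category and `I` a functorially finite ideal.  Then `g` is a right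
`I`-approximation of `Z` iff `h` is a left `Gh_I`-approximation of `Z`; moreover `g` is
an `I`-sink map iff `h` is a `Gh_I`-source map. -/
theorem rightApprox_iff_leftGhostApprox_of_functoriallyFinite
    (K : Type*) [Field K] [Linear K C] [HasZeroObject C]
    [HasShift C ℤ] [∀ n : ℤ, (shiftFunctor C n).Additive] [Pretriangulated C]
    [∀ X Y : C, FiniteDimensional K (X ⟶ Y)] [IsIdempotentComplete C]
    (I : CatIdeal C) (hI : FunctoriallyFinite I)
    {X Y Z : C} (f : X ⟶ Y) (g : Y ⟶ Z) (h : Z ⟶ X⟦(1 : ℤ)⟧)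
    (hT : Triangle.mk f g h ∈ distTriang C) :
    (IsRightApprox I g ↔ IsLeftGhostApprox I h) ∧
    (IsISinkMap I g ↔ IsGhostSourceMap I h) := by
  have happrox := isRightApprox_iff_isLeftGhostApprox hT (hI.1 Z)
  exact ⟨happrox, and_congr happrox (isRightMinimal_iff_isLeftMinimal hT)⟩
end

section
/- Let T be a Hom-finite Krull-Schmidt triangulated K-category over an algebraically closed field, I an Auslander-Reiten ideal, X --u--> Y --v--> Z --w--> X[1] a non-trivial I-mutation triangle with X, Z indecomposable and not in Ob(I), and W an indecomposable object. Write Y = ⊕_{i=1}^n Y_i^{m_i} with the Y_i pairwise non-isomorphic indecomposables. Then Irr^-_I(X, W) := (I/JI)(X, W) is nonzero if and only if W ≅ Y_i for some i, and in that case m_i = dim_K Irr^-_I(X, Y_i). -/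
/-!
Because `u` is a minimal left `I`-approximation, `t ↦ u ≫ t` induces an isomorphism
`Hom(Y, V) / J(Y, V) ≅ Irr⁻_I(X, V)` for every indecomposable `V`: the approximation property
gives surjectivity, and left minimality forces every `t` with `u ≫ t ∈ JI` into the radical.
The decomposition `Y ≅ ⊕ Yᵢ^{mᵢ}` splits `Hom(Y, V) / J(Y, V)` into `mᵢ` copies of each
`Hom(Yᵢ, V) / J(Yᵢ, V)`, which is `K` if `Yᵢ ≅ V` and `0` otherwise. This last fact holds because
over an algebraically closed field every endomorphism of an indecomposable object is a scalar plus
a nilpotent: a factorisation of its minimal polynomial into two coprime nonconstant factors would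
produce a nontrivial idempotent.
-/

open CategoryTheory CategoryTheory.Limits CategoryTheory.Pretriangulated

universe v u

variable {C : Type u} [Category.{v} C]

variable [Preadditive C]

/-- `f ∈ I` is a left `I`-approximation of its source. -/
def IsLeftApprox (I : CatIdeal C) {A B : C} (f : A ⟶ B) : Prop :=
  f ∈ I.carrier ∧ ∀ {W : C} (i : A ⟶ W), i ∈ I.carrier → ∃ t : B ⟶ W, f ≫ t = i

/-- `f` is an `I`-source map: a left minimal left `I`-approximation. -/
def IsISourceMap (I : CatIdeal C) {A B : C} (f : A ⟶ B) : Prop :=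
  IsLeftApprox I f ∧ ∀ u : B ⟶ B, f ≫ u = f → IsIso u

/-- `h` is left `I`-irreducible. -/
def LeftIIrreducible (I : CatIdeal C) {X Y : C} (h : X ⟶ Y) : Prop :=
  h ∈ I.carrier ∧ ∀ {Z : C} (h₁ : X ⟶ Z) (h₂ : Z ⟶ Y), h₁ ≫ h₂ = h → h₁ ∈ I.carrier →
    ∃ s : Y ⟶ Z, s ≫ h₂ = 𝟙 Y

variable [HasZeroObject C] [HasShift C ℤ] [∀ n : ℤ, (shiftFunctor C n).Additive]
  [Pretriangulated C]

/-- `I` is an Auslander-Reiten ideal: it is functorially finite and `(T, T)` is an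
`I`-mutation pair. -/
def IsARIdeal (I : CatIdeal C) : Prop :=
  FunctoriallyFinite I ∧
  (∀ X : C, ∃ (M Y : C) (f : X ⟶ M) (g : M ⟶ Y) (h : Y ⟶ X⟦(1 : ℤ)⟧),
      Triangle.mk f g h ∈ (distTriang C) ∧ IsLeftApprox I f ∧ IsRightApprox I g) ∧
  (∀ Y : C, ∃ (Z N : C) (u : Z ⟶ N) (v : N ⟶ Y) (w : Y ⟶ Z⟦(1 : ℤ)⟧),
      Triangle.mk u v w ∈ (distTriang C) ∧ IsLeftApprox I u ∧ IsRightApprox I v)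

/-- An object is indecomposable if it is nonzero and any biproduct decomposition of it is
trivial. -/
def IndecomposableObj [HasBinaryBiproducts C] (X : C) : Prop :=
  ¬ IsZero X ∧ ∀ (Y Z : C), (X ≅ Y ⊞ Z) → IsZero Y ∨ IsZero Z



/-- `f` lies in the Jacobson radical of the category. -/
def InJacobsonRadical {X Y : C} (f : X ⟶ Y) : Prop :=
  ∀ g : Y ⟶ X, IsIso (𝟙 X - f ≫ g)

section Linear

variable (K : Type*) [Field K] [Linear K C]

/-- `I(X, Y)` as a `K`-submodule of `X ⟶ Y`. -/
def idealSubmodule (I : CatIdeal C) (X Y : C) : Submodule K (X ⟶ Y) where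
  carrier := I.carrier
  add_mem' := I.add_mem
  zero_mem' := I.zero_mem
  smul_mem' := by
    intro k f hf
    have h : k • f = f ≫ (k • 𝟙 Y) := by
      rw [Linear.comp_smul, Category.comp_id]
    rw [h]
    exact I.comp_right _ hf

/-- `(JI)(X, Y)` as a `K`-submodule of `X ⟶ Y`: the span of composites `j ∘ i` with
`i ∈ I` and `j` in the Jacobson radical. -/
def radCompSubmodule (I : CatIdeal C) (X Y : C) : Submodule K (X ⟶ Y) :=
  Submodule.span K {g : X ⟶ Y | ∃ (Z : C) (i : X ⟶ Z) (j : Z ⟶ Y),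
    i ∈ I.carrier ∧ InJacobsonRadical j ∧ i ≫ j = g}

/-- The space `Irr⁻_I(X, W) = (I/JI)(X, W)`. -/
abbrev IrrMinus (I : CatIdeal C) (X W : C) :=
  (idealSubmodule K I X W) ⧸
    ((radCompSubmodule K I X W).comap (idealSubmodule K I X W).subtype)

end Linear

open Polynomial in
theorem exists_isNilpotent_sub_algebraMap {K A : Type*} [Field K] [IsAlgClosed K] [Ring A]
    [Algebra K A] [Nontrivial A] [Module.Finite K A]
    (hA : ∀ e : A, IsIdempotentElem e → e = 0 ∨ e = 1) (a : A) :
    ∃ μ : K, IsNilpotent (a - algebraMap K A μ) := by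
  have ha : IsIntegral K a := Algebra.IsIntegral.isIntegral a
  have hp : minpoly K a ≠ 0 := minpoly.ne_zero ha
  obtain ⟨μ, hμ⟩ := IsAlgClosed.exists_root _ (minpoly.degree_pos ha).ne'
  obtain ⟨g, hpg, hμg⟩ := (minpoly K a).exists_eq_pow_rootMultiplicity_mul_and_not_dvd hp μ
  set k := (minpoly K a).rootMultiplicity μ
  obtain ⟨s, t, hst⟩ : IsCoprime ((X - C μ) ^ k) g :=
    ((irreducible_X_sub_C μ).coprime_iff_not_dvd.mpr hμg).pow_left
  have aeval_mul_minpoly (q : K[X]) : aeval a (q * minpoly K a) = 0 := by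
    rw [map_mul, minpoly.aeval, mul_zero]
  -- `aeval a (t * g)` is an idempotent, the projection onto the generalized `μ`-eigenspace
  set f := aeval a (s * (X - C μ) ^ k)
  set e := aeval a (t * g)
  have hfe : f + e = 1 := by rw [← map_add, hst, map_one]
  have hfe0 : f * e = 0 := by
    rw [← map_mul, show s * (X - C μ) ^ k * (t * g) = s * t * minpoly K a by rw [hpg]; ring]
    exact aeval_mul_minpoly _
  have he : IsIdempotentElem e := by
    calc e * e = (f + e) * e - f * e := by noncomm_ring
      _ = e := by rw [hfe, hfe0, one_mul, sub_zero]
  rcases hA e he with he0 | he1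
  · exfalso
    have hg0 : g ≠ 0 := by rintro rfl; exact hp (by rw [hpg, mul_zero])
    have hga : aeval a g = 0 := by
      rw [← mul_one (aeval a g), ← hfe, he0, add_zero, ← map_mul,
        show g * (s * (X - C μ) ^ k) = s * minpoly K a by rw [hpg]; ring]
      exact aeval_mul_minpoly _
    have hk : 0 < k := (rootMultiplicity_pos hp).mpr hμ
    have hdeg := minpoly.degree_le_of_ne_zero K a hg0 hga
    rw [hpg, degree_mul, degree_pow, degree_X_sub_C, nsmul_one, degree_eq_natDegree hg0] at hdeg
    norm_cast at hdeg
    omega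
  · refine ⟨μ, k, ?_⟩
    rw [← mul_one ((a - algebraMap K A μ) ^ k), ← he1, ← aeval_X (R := K) a, ← aeval_C a μ,
      ← map_sub, ← map_pow, ← map_mul,
      show (X - C μ) ^ k * (t * g) = t * minpoly K a by rw [hpg]; ring]
    exact aeval_mul_minpoly _

section Radical

variable {D : Type*} [Category D] [Preadditive D]

theorem isIso_id_sub_comp_swap {P Q : D} (a : P ⟶ Q) (b : Q ⟶ P) [IsIso (𝟙 P - a ≫ b)] :
    IsIso (𝟙 Q - b ≫ a) := by
  set c := inv (𝟙 P - a ≫ b)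
  have hc : a ≫ b ≫ c = c - 𝟙 P := by
    have := IsIso.hom_inv_id (𝟙 P - a ≫ b)
    rw [Preadditive.sub_comp, Category.id_comp, Category.assoc] at this
    rw [← this, sub_sub_cancel]
  have hc' : c ≫ a ≫ b = c - 𝟙 P := by
    have := IsIso.inv_hom_id (𝟙 P - a ≫ b)
    rw [Preadditive.comp_sub, Category.comp_id] at this
    rw [← this, sub_sub_cancel]
  refine ⟨𝟙 Q + b ≫ c ≫ a, ?_, ?_⟩
  all_goals
    simp only [Preadditive.sub_comp, Preadditive.comp_sub, Preadditive.add_comp,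
      Preadditive.comp_add, Category.id_comp, Category.comp_id, Category.assoc,
      reassoc_of% hc, reassoc_of% hc']
    abel

namespace InJacobsonRadical

theorem zero (A B : D) : InJacobsonRadical (0 : A ⟶ B) := by
  intro g
  rw [zero_comp, sub_zero]
  infer_instance

theorem comp_left {A' A B : D} (h : A' ⟶ A) {f : A ⟶ B} (hf : InJacobsonRadical f) :
    InJacobsonRadical (h ≫ f) := by
  intro g
  have : IsIso (𝟙 A - (f ≫ g) ≫ h) := by simpa only [Category.assoc] using hf (g ≫ h)
  simpa only [Category.assoc] using isIso_id_sub_comp_swap (f ≫ g) h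

theorem add {A B : D} {f f' : A ⟶ B} (hf : InJacobsonRadical f) (hf' : InJacobsonRadical f') :
    InJacobsonRadical (f + f') := by
  intro g
  have := hf g
  set c := inv (𝟙 A - f ≫ g)
  have : IsIso (𝟙 A - (f' ≫ g) ≫ c) := by simpa only [Category.assoc] using hf' (g ≫ c)
  have := isIso_id_sub_comp_swap (f' ≫ g) c
  have key : 𝟙 A - (f + f') ≫ g = (𝟙 A - f ≫ g) ≫ (𝟙 A - c ≫ f' ≫ g) := by
    rw [Preadditive.comp_sub, Category.comp_id, IsIso.hom_inv_id_assoc, Preadditive.add_comp]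
    abel
  rw [key]
  infer_instance

end InJacobsonRadical

variable (K : Type*) [Field K] [Linear K D]

theorem InJacobsonRadical.smul {A B : D} (k : K) {f : A ⟶ B} (hf : InJacobsonRadical f) :
    InJacobsonRadical (k • f) := by
  intro g
  simpa only [Linear.smul_comp, Linear.comp_smul] using hf (k • g)

def radSubmodule (A B : D) : Submodule K (A ⟶ B) where
  carrier := {f | InJacobsonRadical f}
  add_mem' := InJacobsonRadical.add
  zero_mem' := InJacobsonRadical.zero A B
  smul_mem' := InJacobsonRadical.smul K

@[simp]
theorem mem_radSubmodule {A B : D} {f : A ⟶ B} : f ∈ radSubmodule K A B ↔ InJacobsonRadical f :=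
  Iff.rfl

end Radical

section Indecomposable

variable {D : Type*} [Category D] [Preadditive D] [HasBinaryBiproducts D]

theorem IndecomposableObj.nontrivial_end {W : D} (hW : IndecomposableObj W) :
    Nontrivial (End W) :=
  ⟨𝟙 W, 0, fun h => hW.1 ((IsZero.iff_id_eq_zero W).mpr h)⟩

variable [IsIdempotentComplete D] (K : Type*) [Field K] [IsAlgClosed K] [Linear K D]

namespace IndecomposableObj

theorem eq_zero_or_eq_id_of_idem {W : D} (hW : IndecomposableObj W)
    {p : W ⟶ W} (hp : p ≫ p = p) : p = 0 ∨ p = 𝟙 W := by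
  have hq : (𝟙 W - p) ≫ (𝟙 W - p) = 𝟙 W - p := by
    simp only [Preadditive.sub_comp, Preadditive.comp_sub, Category.id_comp, Category.comp_id, hp,
      sub_self, sub_zero]
  obtain ⟨A, iA, eA, hiA, hpA⟩ := IsIdempotentComplete.idempotents_split W p hp
  obtain ⟨B, iB, eB, hiB, hpB⟩ := IsIdempotentComplete.idempotents_split W (𝟙 W - p) hq
  -- the splittings of `p` and `𝟙 - p` exhibit `W` as a biproduct `A ⊞ B`
  have hAB : iA ≫ eB = 0 := by
    rw [← Category.comp_id (iA ≫ eB), ← hiB, ← Category.assoc, Category.assoc iA, hpB,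
      Preadditive.comp_sub, ← hpA, reassoc_of% hiA, Category.comp_id, sub_self, zero_comp]
  have hBA : iB ≫ eA = 0 := by
    rw [← Category.comp_id (iB ≫ eA), ← hiA, ← Category.assoc, Category.assoc iB, hpA,
      ← sub_sub_cancel (𝟙 W) p, Preadditive.comp_sub, ← hpB, reassoc_of% hiB, Category.comp_id,
      sub_self, zero_comp]
  let b : BinaryBicone A B := ⟨W, eA, eB, iA, iB, hiA, hAB, hBA, hiB⟩
  have hb : b.IsBilimit := isBinaryBilimitOfTotal b (by simp [b, hpA, hpB])
  rcases hW.2 A B (biprod.uniqueUpToIso A B hb) with hA | hB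
  · exact Or.inl (by rw [← hpA, hA.eq_of_tgt eA 0, zero_comp])
  · exact Or.inr (sub_eq_zero.mp (by rw [← hpB, hB.eq_of_tgt eB 0, zero_comp])).symm

theorem isIso_of_comp_eq_id {W V : D} (hW : IndecomposableObj W)
    (hV : ¬IsZero V) {s : W ⟶ V} {t : V ⟶ W} (h : t ≫ s = 𝟙 V) : IsIso s := by
  have hst : (s ≫ t) ≫ s ≫ t = s ≫ t := by rw [Category.assoc, reassoc_of% h]
  rcases hW.eq_zero_or_eq_id_of_idem hst with h0 | h1
  · refine absurd ((IsZero.iff_id_eq_zero V).mpr ?_) hV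
    rw [← h, ← Category.id_comp (t ≫ s), ← h, Category.assoc, reassoc_of% h0, zero_comp,
      comp_zero]
  · exact ⟨t, h1, h⟩

theorem exists_isNilpotent_sub_smul_id {W : D} [FiniteDimensional K (W ⟶ W)]
    (hW : IndecomposableObj W) (a : End W) : ∃ μ : K, IsNilpotent (a - μ • 1) := by
  have := hW.nontrivial_end
  have : Module.Finite K (End W) := ‹FiniteDimensional K (W ⟶ W)›
  simpa only [Algebra.algebraMap_eq_smul_one] using
    exists_isNilpotent_sub_algebraMap (fun e he => hW.eq_zero_or_eq_id_of_idem he.eq) a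

theorem isIso_or_isNilpotent {W : D} [FiniteDimensional K (W ⟶ W)] (hW : IndecomposableObj W)
    (a : End W) : IsIso a ∨ IsNilpotent a := by
  obtain ⟨μ, hμ⟩ := hW.exists_isNilpotent_sub_smul_id K a
  rcases eq_or_ne μ 0 with rfl | hμ0
  · exact Or.inr (by simpa only [zero_smul, sub_zero] using hμ)
  · left
    have hunit : IsUnit (algebraMap K (End W) μ) := (isUnit_iff_ne_zero.mpr hμ0).map _
    rw [Algebra.algebraMap_eq_smul_one] at hunit
    have := hμ.isUnit_add_left_of_commute hunit ((Commute.one_right _).smul_right μ)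
    rwa [add_sub_cancel, isUnit_iff_isIso] at this

end IndecomposableObj

theorem inJacobsonRadical_iff_forall_comp_ne_id {A V : D} [FiniteDimensional K (V ⟶ V)]
    (hV : IndecomposableObj V) (s : A ⟶ V) :
    InJacobsonRadical s ↔ ∀ t : V ⟶ A, t ≫ s ≠ 𝟙 V := by
  constructor
  · intro hs t hts
    have := hs t
    have := isIso_id_sub_comp_swap s t
    rw [hts, sub_self] at this
    exact hV.1 (IsZero.of_mono_zero V V)
  · intro h g
    rcases hV.isIso_or_isNilpotent K (g ≫ s) with hiso | hnil
    · exact absurd (by simp) (h (inv (g ≫ s) ≫ g))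
    · have : IsIso (𝟙 V - g ≫ s) := (isUnit_iff_isIso _).mp hnil.isUnit_one_sub
      exact isIso_id_sub_comp_swap g s

theorem inJacobsonRadical_iff_not_isIso {W V : D} [FiniteDimensional K (V ⟶ V)]
    (hW : IndecomposableObj W) (hV : IndecomposableObj V) (f : W ⟶ V) :
    InJacobsonRadical f ↔ ¬IsIso f := by
  rw [inJacobsonRadical_iff_forall_comp_ne_id K hV]
  exact ⟨fun h hf => h (inv f) (IsIso.inv_hom_id f),
    fun h t ht => h (hW.isIso_of_comp_eq_id hV.1 ht)⟩

theorem radSubmodule_eq_top_iff {W V : D} [FiniteDimensional K (V ⟶ V)]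
    (hW : IndecomposableObj W) (hV : IndecomposableObj V) :
    radSubmodule K W V = ⊤ ↔ IsEmpty (W ≅ V) := by
  simp only [Submodule.eq_top_iff', mem_radSubmodule, inJacobsonRadical_iff_not_isIso K hW hV]
  exact ⟨fun h => ⟨fun φ => h φ.hom inferInstance⟩, fun h f hf => h.false (asIso f)⟩

theorem finrank_quotient_radSubmodule_self {V : D} [FiniteDimensional K (V ⟶ V)]
    (hV : IndecomposableObj V) : Module.finrank K ((V ⟶ V) ⧸ radSubmodule K V V) = 1 := by
  have := hV.nontrivial_end
  refine finrank_eq_one (Submodule.Quotient.mk (𝟙 V)) ?_ fun w => ?_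
  · rw [Ne, Submodule.Quotient.mk_eq_zero, mem_radSubmodule,
      inJacobsonRadical_iff_not_isIso K hV hV, not_not]
    infer_instance
  · obtain ⟨a, rfl⟩ := Submodule.Quotient.mk_surjective _ w
    obtain ⟨μ, hμ⟩ := hV.exists_isNilpotent_sub_smul_id K a
    refine ⟨μ, ?_⟩
    rw [← Submodule.Quotient.mk_smul, Submodule.Quotient.eq, ← neg_mem_iff, neg_sub,
      mem_radSubmodule, inJacobsonRadical_iff_not_isIso K hV hV, ← isUnit_iff_isIso]
    exact hμ.not_isUnit

theorem finrank_quotient_radSubmodule_eq_zero {W V : D} [FiniteDimensional K (V ⟶ V)]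
    (hW : IndecomposableObj W) (hV : IndecomposableObj V) (h : IsEmpty (W ≅ V)) :
    Module.finrank K ((W ⟶ V) ⧸ radSubmodule K W V) = 0 :=
  have := Submodule.Quotient.subsingleton_iff.mpr ((radSubmodule_eq_top_iff K hW hV).mpr h)
  Module.finrank_zero_of_subsingleton

theorem inJacobsonRadical_of_comp_eq_zero {X Y V : D} [FiniteDimensional K (V ⟶ V)]
    (hV : IndecomposableObj V) {u : X ⟶ Y} (hu : ∀ q : Y ⟶ Y, u ≫ q = u → IsIso q)
    {s : Y ⟶ V} (hs : u ≫ s = 0) : InJacobsonRadical s := by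
  rw [inJacobsonRadical_iff_forall_comp_ne_id K hV]
  intro t hts
  have := hu (𝟙 Y - s ≫ t) (by rw [Preadditive.comp_sub, reassoc_of% hs]; simp)
  have hs0 : s = 0 := by
    rw [← cancel_epi (𝟙 Y - s ≫ t), Preadditive.sub_comp, Category.assoc, hts]
    simp
  exact hV.1 ((IsZero.iff_id_eq_zero V).mpr (by rw [← hts, hs0, comp_zero]))

end Indecomposable

theorem subsingleton_irrMinus_iff {D : Type*} [Category D] [Preadditive D] (K : Type*) [Field K]
    [Linear K D] (I : CatIdeal D) (X W : D) :
    Subsingleton (IrrMinus K I X W) ↔ idealSubmodule K I X W ≤ radCompSubmodule K I X W :=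
  Submodule.Quotient.subsingleton_iff.trans Submodule.comap_subtype_eq_top

section Biproduct

variable {D : Type*} [Category D] [Preadditive D] (K : Type*) [Field K] [Linear K D]
variable {ι : Type} {F : ι → D} [HasBiproduct F] {Y : D} (e : Y ≅ ⨁ F) (V : D)

theorem mem_radSubmodule_iff_forall_ι_comp [Fintype ι] {f : Y ⟶ V} :
    f ∈ radSubmodule K Y V ↔ ∀ j, biproduct.ι F j ≫ e.inv ≫ f ∈ radSubmodule K (F j) V := by
  refine ⟨fun hf j => .comp_left _ (.comp_left _ hf), fun h => ?_⟩
  have hf : f = ∑ j, (e.hom ≫ biproduct.π F j) ≫ biproduct.ι F j ≫ e.inv ≫ f := by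
    conv_lhs => rw [← Iso.hom_inv_id_assoc e f, ← Category.id_comp e.inv, ← biproduct.total]
    simp only [Preadditive.sum_comp, Preadditive.comp_sum, Category.assoc]
  rw [hf]
  exact Submodule.sum_mem _ fun j _ => InJacobsonRadical.comp_left _ (h j)

noncomputable def radQuotientPiMap : (Y ⟶ V) →ₗ[K] ∀ j, (F j ⟶ V) ⧸ radSubmodule K (F j) V :=
  LinearMap.pi fun j =>
    (radSubmodule K (F j) V).mkQ ∘ₗ Linear.leftComp K V (biproduct.ι F j ≫ e.inv)

theorem ker_radQuotientPiMap [Fintype ι] :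
    LinearMap.ker (radQuotientPiMap K e V) = radSubmodule K Y V := by
  ext f
  simp only [LinearMap.mem_ker, radQuotientPiMap, funext_iff, LinearMap.pi_apply,
    LinearMap.comp_apply, Submodule.mkQ_apply, Submodule.Quotient.mk_eq_zero, Pi.zero_apply,
    Linear.leftComp_apply, Category.assoc, mem_radSubmodule_iff_forall_ι_comp K e V]

theorem radQuotientPiMap_surjective : Function.Surjective (radQuotientPiMap K e V) := by
  intro x
  choose g hg using fun j => Submodule.Quotient.mk_surjective _ (x j)
  refine ⟨e.hom ≫ biproduct.desc g, funext fun j => ?_⟩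
  simp [radQuotientPiMap, hg]

noncomputable def radQuotientPiEquiv [Fintype ι] :
    ((Y ⟶ V) ⧸ radSubmodule K Y V) ≃ₗ[K] ∀ j, (F j ⟶ V) ⧸ radSubmodule K (F j) V :=
  (Submodule.quotEquivOfEq _ _ (ker_radQuotientPiMap K e V).symm).trans
    ((radQuotientPiMap K e V).quotKerEquivOfSurjective (radQuotientPiMap_surjective K e V))

end Biproduct

section IrrMinusMap

variable {D : Type*} [Category D] [Preadditive D] (K : Type*) [Field K] [Linear K D]
variable {I : CatIdeal D} {X Y V : D} {u : X ⟶ Y}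

noncomputable def irrMinusMap (I : CatIdeal D) (hu : u ∈ I.carrier) (V : D) :
    (Y ⟶ V) →ₗ[K] IrrMinus K I X V :=
  Submodule.mkQ _ ∘ₗ (Linear.leftComp K V u).codRestrict _ fun t => I.comp_right t hu

theorem IsLeftApprox.irrMinusMap_surjective (hu : IsLeftApprox I u) :
    Function.Surjective (irrMinusMap K I hu.1 V) := by
  rintro ⟨⟨f, hf⟩⟩
  obtain ⟨t, rfl⟩ := hu.2 f hf
  exact ⟨t, rfl⟩

end IrrMinusMap

section SourceMap

variable {D : Type*} [Category D] [Preadditive D] [HasBinaryBiproducts D]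
variable [IsIdempotentComplete D] (K : Type*) [Field K] [IsAlgClosed K] [Linear K D]
variable {I : CatIdeal D} {X Y V : D} {u : X ⟶ Y}

theorem IsISourceMap.comp_mem_radCompSubmodule_iff (hu : IsISourceMap I u)
    [FiniteDimensional K (V ⟶ V)] (hV : IndecomposableObj V) (t : Y ⟶ V) :
    u ≫ t ∈ radCompSubmodule K I X V ↔ t ∈ radSubmodule K Y V := by
  refine ⟨fun ht => ?_, fun ht => Submodule.subset_span ⟨Y, u, t, hu.1.1, ht, rfl⟩⟩
  have hle : radCompSubmodule K I X V ≤ (radSubmodule K Y V).map (Linear.leftComp K V u) := by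
    refine Submodule.span_le.mpr ?_
    rintro _ ⟨_, i, j, hi, hj, rfl⟩
    obtain ⟨s, rfl⟩ := hu.1.2 i hi
    exact ⟨s ≫ j, hj.comp_left s, by simp⟩
  obtain ⟨r, hr, hru⟩ := hle ht
  have hdiff : InJacobsonRadical (t - r) :=
    inJacobsonRadical_of_comp_eq_zero K hV hu.2 (by simp_all [Preadditive.comp_sub])
  simpa using hdiff.add hr

theorem IsISourceMap.ker_irrMinusMap (hu : IsISourceMap I u) [FiniteDimensional K (V ⟶ V)]
    (hV : IndecomposableObj V) :
    LinearMap.ker (irrMinusMap K I hu.1.1 V) = radSubmodule K Y V := by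
  ext t
  exact Submodule.Quotient.mk_eq_zero _ |>.trans (hu.comp_mem_radCompSubmodule_iff K hV t)

noncomputable def IsISourceMap.irrMinusEquiv (hu : IsISourceMap I u)
    [FiniteDimensional K (V ⟶ V)] (hV : IndecomposableObj V) :
    ((Y ⟶ V) ⧸ radSubmodule K Y V) ≃ₗ[K] IrrMinus K I X V :=
  (Submodule.quotEquivOfEq _ _ (hu.ker_irrMinusMap K hV).symm).trans
    ((irrMinusMap K I hu.1.1 V).quotKerEquivOfSurjective (hu.1.irrMinusMap_surjective K))

end SourceMap

/-- Theorem on `I`-mutation triangles: for a non-trivial `I`-mutation triangle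
`X ⟶ Y ⟶ Z ⟶ X[1]` with `Y = ⊕ᵢ Yᵢ^{mᵢ}` (the `Yᵢ` pairwise non-isomorphic
indecomposables) and `W` indecomposable: `Irr⁻_I(X, W) ≠ 0` iff `W ≅ Yᵢ` for some `i`,
and in that case `mᵢ = dim_K Irr⁻_I(X, Yᵢ)`. -/
theorem mutationTriangle_irrMinus
    (K : Type*) [Field K] [IsAlgClosed K] [Linear K C]
    [∀ A B : C, FiniteDimensional K (A ⟶ B)] [IsIdempotentComplete C]
    [HasFiniteBiproducts C]
    (I : CatIdeal C) (hAR : IsARIdeal I)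
    {X Y Z : C} (u : X ⟶ Y) (v : Y ⟶ Z) (w : Z ⟶ X⟦(1 : ℤ)⟧)
    (hT : Triangle.mk u v w ∈ distTriang C)
    (hX : IndecomposableObj X) (hZ : IndecomposableObj Z)
    (hXI : 𝟙 X ∉ I.carrier) (hZI : 𝟙 Z ∉ I.carrier)
    (hu : IsISourceMap I u) (hv : IsISinkMap I v)
    (n : ℕ) (Y₀ : Fin n → C) (m : Fin n → ℕ) (hm : ∀ i, 0 < m i)
    (hY₀ : ∀ i, IndecomposableObj (Y₀ i))
    (hY₀' : ∀ i j, i ≠ j → IsEmpty (Y₀ i ≅ Y₀ j))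
    (e : Y ≅ ⨁ (fun p : Σ i : Fin n, Fin (m i) => Y₀ p.1))
    (W : C) (hW : IndecomposableObj W) :
    (¬ (idealSubmodule K I X W ≤ radCompSubmodule K I X W) ↔
        ∃ i, Nonempty (W ≅ Y₀ i)) ∧
    (∀ i : Fin n, Nonempty (W ≅ Y₀ i) →
        Module.finrank K (IrrMinus K I X (Y₀ i)) = m i) := by
  have : HasBinaryBiproducts C := hasBinaryBiproducts_of_finite_biproducts C
  let E (V : C) (hV : IndecomposableObj V) : IrrMinus K I X V ≃ₗ[K]
      ∀ p : Σ i : Fin n, Fin (m i), (Y₀ p.1 ⟶ V) ⧸ radSubmodule K (Y₀ p.1) V :=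
    (hu.irrMinusEquiv K hV).symm.trans (radQuotientPiEquiv K e V)
  refine ⟨?_, fun i _ => ?_⟩
  · rw [← subsingleton_irrMinus_iff, ← Module.finrank_zero_iff (R := K), (E W hW).finrank_eq,
      Module.finrank_pi_fintype, Finset.sum_eq_zero_iff, not_iff_comm, not_exists]
    simp only [Finset.mem_univ, true_implies, Module.finrank_zero_iff,
      Submodule.Quotient.subsingleton_iff, radSubmodule_eq_top_iff K (hY₀ _) hW, not_nonempty_iff]
    exact ⟨fun h p => ⟨fun φ => (h p.1).false φ.symm⟩,
      fun h i => ⟨fun φ => (h ⟨i, 0, hm i⟩).false φ.symm⟩⟩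
  · rw [(E _ (hY₀ i)).finrank_eq, Module.finrank_pi_fintype]
    have hfin (j : Fin n) : Module.finrank K ((Y₀ j ⟶ Y₀ i) ⧸ radSubmodule K (Y₀ j) (Y₀ i)) =
        if j = i then 1 else 0 := by
      split_ifs with hji
      · subst hji
        exact finrank_quotient_radSubmodule_self K (hY₀ j)
      · exact finrank_quotient_radSubmodule_eq_zero K (hY₀ j) (hY₀ i) (hY₀' j i hji)
    rw [Fintype.sum_sigma]
    simp [hfin]
end

section
/- Let T be a Hom-finite Krull-Schmidt triangulated K-category, I an Auslander-Reiten ideal of T, X an indecomposable object not in Ob(I), f: X -> Y an I-source map, and p: Y -> Y' a split epimorphism with Y' ≠ 0. Then p∘f is left I-irreducible. -/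
open CategoryTheory CategoryTheory.Limits CategoryTheory.Pretriangulated

universe v u

variable {C : Type u} [Category.{v} C]

variable [Preadditive C]

variable [HasZeroObject C] [HasShift C ℤ] [∀ n : ℤ, (shiftFunctor C n).Additive]
  [Pretriangulated C]

/-!
Write `f ≫ p = h₁ ≫ h₂` with `h₁ ∈ I`. Since `f` is a left `I`-approximation, `h₁ = f ≫ t`.
Correcting `t ≫ h₂ ≫ s` by the complementary idempotent `𝟙 - p ≫ s` gives an endomorphism `u`
of `Y` with `f ≫ u = f` and `u ≫ p = t ≫ h₂`; left minimality makes `u` invertible, and then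
`s ≫ u⁻¹ ≫ t` is a section of `h₂`.
-/

section LeftMinimal

variable {D : Type*} [Category D] [Preadditive D]

lemma comp_add_sub_comp_eq_self {X Y Y' : D} {f : X ⟶ Y} {p : Y ⟶ Y'} {s : Y' ⟶ Y}
    {v : Y ⟶ Y} (hv : f ≫ v = f ≫ p ≫ s) :
    f ≫ (v + (𝟙 Y - p ≫ s)) = f := by
  rw [Preadditive.comp_add, Preadditive.comp_sub, hv, Category.comp_id, add_sub_cancel]

lemma add_sub_comp_comp_eq {Y Y' : D} {p : Y ⟶ Y'} {s : Y' ⟶ Y} (hp : s ≫ p = 𝟙 Y')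
    (w : Y ⟶ Y') : (w ≫ s + (𝟙 Y - p ≫ s)) ≫ p = w := by
  simp only [Preadditive.add_comp, Preadditive.sub_comp, Category.assoc, hp,
    Category.comp_id, Category.id_comp, sub_self, add_zero]

lemma exists_section_of_leftMinimal {X Y Y' Z : D} {f : X ⟶ Y}
    (hmin : ∀ u : Y ⟶ Y, f ≫ u = f → IsIso u) {p : Y ⟶ Y'} {s : Y' ⟶ Y}
    (hp : s ≫ p = 𝟙 Y') {t : Y ⟶ Z} {h₂ : Z ⟶ Y'} (hfac : f ≫ t ≫ h₂ = f ≫ p) :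
    ∃ σ : Y' ⟶ Z, σ ≫ h₂ = 𝟙 Y' := by
  set u : Y ⟶ Y := (t ≫ h₂) ≫ s + (𝟙 Y - p ≫ s)
  have hfu : f ≫ u = f :=
    comp_add_sub_comp_eq_self (by rw [← Category.assoc, hfac, Category.assoc])
  have hup : u ≫ p = t ≫ h₂ := add_sub_comp_comp_eq hp (t ≫ h₂)
  have := hmin u hfu
  refine ⟨s ≫ inv u ≫ t, ?_⟩
  rw [Category.assoc, Category.assoc, ← hup, IsIso.inv_hom_id_assoc, hp]

end LeftMinimal

/-- Let `I` be an Auslander-Reiten ideal of a Hom-finite Krull-Schmidt triangulated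
`K`-category, `X` indecomposable with `𝟙 X ∉ I`, `f : X ⟶ Y` an `I`-source map and
`p : Y ⟶ Y'` a split epimorphism with `Y' ≠ 0`.  Then `p ∘ f` is left `I`-irreducible. -/
theorem leftIIrreducible_of_sourceMap_comp_splitEpi
    (K : Type*) [Field K] [IsAlgClosed K] [Linear K C]
    [∀ A B : C, FiniteDimensional K (A ⟶ B)] [IsIdempotentComplete C]
    [HasBinaryBiproducts C]
    (I : CatIdeal C) (hAR : IsARIdeal I)
    {X Y Y' : C} (f : X ⟶ Y) (p : Y ⟶ Y') (s : Y' ⟶ Y)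
    (hX : IndecomposableObj X) (hXI : 𝟙 X ∉ I.carrier)
    (hf : IsISourceMap I f) (hp : s ≫ p = 𝟙 Y') (hY' : ¬ IsZero Y') :
    LeftIIrreducible I (f ≫ p) := by
  obtain ⟨⟨hfI, hfactor⟩, hmin⟩ := hf
  refine ⟨I.comp_right p hfI, fun h₁ h₂ hfac h₁I => ?_⟩
  obtain ⟨t, rfl⟩ := hfactor h₁ h₁I
  exact exists_section_of_leftMinimal hmin hp (by rw [← Category.assoc, hfac])
end
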